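/- Let G be an integrable random variable, α ∈ (0,1), λ_α = F_G^{-1}(α) its α-quantile, and suppose P(G = λ_α) = 0. Define the dual variable ξ^α = (1/α)·1{G ≤ λ_α}. Then E[ξ^α] = 1, 0 ≤ ξ^α ≤ 1/α, and E[ξ^α · G] = CVaR_α(G) = (1/α)∫₀^α F_G^{-1}(u) du. -/

import Mathlib

/-!
For `u ∈ (0, 1)` the quantile and the CDF `F` form a Galois connection,
`quantile u ≤ z ↔ u ≤ F z`, so the quantile pushes Lebesgue measure on `(0, 1)` forward to the
law `μ` of `G`. Without an atom at `λ_α` one has `F λ_α = α`, and the same connection shows that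
the quantile pushes Lebesgue measure on `(0, α]` forward to `μ` restricted to `(-∞, λ_α]`.
Integrating the identity against these two measures gives `E[G; G ≤ λ_α] = ∫₀^α F⁻¹`, and
`E[ξ^α] = F λ_α / α = 1`.
-/

open MeasureTheory ProbabilityTheory Set

namespace ProbabilityTheory

/-- Only meaningful on `(0, 1)`: for `u ≤ 0` the set is not bounded below, for `1 ≤ u` it may be
empty, and `sInf` then returns `0`. -/
noncomputable def quantile (μ : Measure ℝ) (u : ℝ) : ℝ := sInf {z | u ≤ cdf μ z}

variable {μ : Measure ℝ} {u : ℝ}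

lemma bddBelow_setOf_le_cdf (hu : 0 < u) : BddBelow {z | u ≤ cdf μ z} := by
  obtain ⟨b, hb⟩ :=
    ((tendsto_cdf_atBot μ).eventually (eventually_lt_nhds hu)).exists_forall_of_atBot
  exact ⟨b, fun z hz => le_of_not_gt fun hzb => (hz.trans_lt (hb z hzb.le)).false⟩

lemma nonempty_setOf_le_cdf (hu : u < 1) : {z | u ≤ cdf μ z}.Nonempty :=
  ((tendsto_cdf_atTop μ).eventually (eventually_ge_nhds hu)).exists

lemma le_cdf_quantile (hu : u ∈ Ioo 0 1) : u ≤ cdf μ (quantile μ u) := by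
  have h_above : ∀ z > quantile μ u, u ≤ cdf μ z := fun z hz => by
    obtain ⟨s, hs, hsz⟩ := exists_lt_of_csInf_lt (nonempty_setOf_le_cdf hu.2) hz
    exact hs.trans (monotone_cdf μ hsz.le)
  exact ge_of_tendsto (((cdf μ).right_continuous _).mono Ioi_subset_Ici_self)
    (eventually_nhdsWithin_of_forall h_above)

lemma quantile_le_iff (hu : u ∈ Ioo 0 1) {z : ℝ} : quantile μ u ≤ z ↔ u ≤ cdf μ z :=
  ⟨fun h => (le_cdf_quantile hu).trans (monotone_cdf μ h),
    fun h => csInf_le (bddBelow_setOf_le_cdf hu.1) h⟩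

lemma monotoneOn_quantile : MonotoneOn (quantile μ) (Ioo 0 1) := fun _ hu _ hv huv =>
  (quantile_le_iff hu).2 (huv.trans (le_cdf_quantile hv))

lemma cdf_quantile_of_measure_singleton [IsProbabilityMeasure μ] (hu : u ∈ Ioo 0 1)
    (h : μ {quantile μ u} = 0) :
    cdf μ (quantile μ u) = u := by
  refine le_antisymm ?_ (le_cdf_quantile hu)
  have h_left : ∀ z < quantile μ u, cdf μ z ≤ u := fun z hz =>
    (lt_of_not_ge fun h => hz.not_ge ((quantile_le_iff hu).2 h)).le
  have h_leftLim : Function.leftLim (cdf μ) (quantile μ u) ≤ u :=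
    le_of_tendsto ((monotone_cdf μ).tendsto_leftLim _) (eventually_nhdsWithin_of_forall h_left)
  have h_jump := (cdf μ).measure_singleton (quantile μ u)
  rw [measure_cdf, h, eq_comm, ENNReal.ofReal_eq_zero] at h_jump
  linarith

lemma aemeasurable_quantile : AEMeasurable (quantile μ) (volume.restrict (Ioo 0 1)) :=
  aemeasurable_restrict_of_monotoneOn measurableSet_Ioo monotoneOn_quantile

theorem map_quantile_volume [IsProbabilityMeasure μ] :
    (volume.restrict (Ioo 0 1)).map (quantile μ) = μ := by
  refine Measure.ext_of_Iic _ _ fun z => ?_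
  rw [Measure.map_apply₀ aemeasurable_quantile measurableSet_Iic.nullMeasurableSet,
    Measure.restrict_apply' measurableSet_Ioo]
  have h_pre : quantile μ ⁻¹' Iic z ∩ Ioo 0 1 = Iic (cdf μ z) ∩ Ioo 0 1 := by
    ext u
    simp only [mem_inter_iff, mem_preimage, mem_Iic, and_congr_left_iff]
    exact fun hu => quantile_le_iff hu
  rw [h_pre, measure_congr (ae_eq_refl _ |>.inter Ioo_ae_eq_Ioc),
    Iic_inter_Ioc_of_le (cdf_le_one μ z), Real.volume_Ioc, sub_zero, ofReal_cdf]

lemma map_restrict_Ioc_quantile [IsProbabilityMeasure μ] {α : ℝ} (hα : α ∈ Ioo 0 1)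
    (h_cdf : cdf μ (quantile μ α) = α) :
    (volume.restrict (Ioc 0 α)).map (quantile μ) = μ.restrict (Iic (quantile μ α)) := by
  have h_pre : quantile μ ⁻¹' Iic (quantile μ α) ∩ Ioo 0 1 = Ioc 0 α := by
    ext u
    simp only [mem_inter_iff, mem_preimage, mem_Iic, mem_Ioo, mem_Ioc]
    constructor
    · rintro ⟨hQ, hu⟩
      exact ⟨hu.1, h_cdf ▸ (quantile_le_iff hu).1 hQ⟩
    · rintro ⟨hu₀, huα⟩
      have hu : u ∈ Ioo 0 1 := ⟨hu₀, huα.trans_lt hα.2⟩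
      exact ⟨(quantile_le_iff hu).2 (by rwa [h_cdf]), hu⟩
  rw [← h_pre, ← Measure.restrict_restrict' measurableSet_Ioo,
    ← Measure.restrict_map_of_aemeasurable aemeasurable_quantile measurableSet_Iic,
    map_quantile_volume]

lemma setIntegral_Iic_quantile [IsProbabilityMeasure μ] {α : ℝ} (hα : α ∈ Ioo 0 1)
    (h_cdf : cdf μ (quantile μ α) = α) :
    ∫ y in Iic (quantile μ α), y ∂μ = ∫ u in Ioc 0 α, quantile μ u := by
  rw [← map_restrict_Ioc_quantile hα h_cdf]
  exact integral_map (aemeasurable_quantile.mono_measure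
    (Measure.restrict_mono (Ioc_subset_Ioo_right hα.2) le_rfl)) aestronglyMeasurable_id

end ProbabilityTheory

theorem stmt11_general {Ω : Type*} [MeasurableSpace Ω] (P : Measure Ω) [IsProbabilityMeasure P]
    (G : Ω → ℝ) (hGm : Measurable G)
    (α : ℝ) (hα : α ∈ Set.Ioo (0:ℝ) 1)
    (q : ℝ → ℝ) (hq : ∀ u, q u = sInf {z | u ≤ (P {ω | G ω ≤ z}).toReal})
    (lam : ℝ) (hlam : lam = q α)
    (hatom : P {ω | G ω = lam} = 0)
    (ξ : Ω → ℝ) (hξ : ∀ ω, ξ ω = if G ω ≤ lam then α⁻¹ else 0) :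
    (∫ ω, ξ ω ∂P = 1)
    ∧ (∀ ω, ξ ω ∈ Set.Icc (0:ℝ) α⁻¹)
    ∧ (∫ ω, ξ ω * G ω ∂P = α⁻¹ * ∫ u in Set.Ioc (0:ℝ) α, q u) := by
  set μ := P.map G
  have : IsProbabilityMeasure μ := Measure.isProbabilityMeasure_map hGm.aemeasurable
  have h_cdf : ∀ z, cdf μ z = P.real (G ⁻¹' Iic z) := fun z => by
    rw [cdf_eq_real, map_measureReal_apply hGm measurableSet_Iic]
  have hq_eq : q = quantile μ := funext fun u => by simp only [hq, quantile, h_cdf]; rfl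
  have hlam_eq : lam = quantile μ α := hlam.trans (congrFun hq_eq α)
  have h_cdf_lam : cdf μ lam = α := by
    rw [hlam_eq]
    refine cdf_quantile_of_measure_singleton hα ?_
    rw [← hlam_eq, Measure.map_apply hGm (measurableSet_singleton _)]
    exact hatom
  have hξ_eq : ξ = (G ⁻¹' Iic lam).indicator fun _ => α⁻¹ := funext fun ω => by
    simp only [hξ, indicator, mem_preimage, mem_Iic]
  have hξG_eq : (fun ω => ξ ω * G ω) = (G ⁻¹' Iic lam).indicator fun ω => α⁻¹ * G ω :=
    funext fun ω => by by_cases h : G ω ≤ lam <;> simp [hξ, h]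
  refine ⟨?_, fun ω => ?_, ?_⟩
  · rw [hξ_eq, integral_indicator_const _ (hGm measurableSet_Iic), smul_eq_mul,
      ← h_cdf, h_cdf_lam, mul_inv_cancel₀ hα.1.ne']
  · rw [hξ]
    split_ifs <;> simp [hα.1.le]
  · have h_pushforward : ∫ ω in G ⁻¹' Iic lam, G ω ∂P = ∫ y in Iic lam, y ∂μ :=
      (setIntegral_map measurableSet_Iic aestronglyMeasurable_id hGm.aemeasurable).symm
    rw [hξG_eq, integral_indicator (hGm measurableSet_Iic), integral_const_mul, h_pushforward,
      hq_eq, hlam_eq, setIntegral_Iic_quantile hα (hlam_eq ▸ h_cdf_lam)]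

/-- CVaR dual variable (continuous case): with λ_α = F_G⁻¹(α), P(G = λ_α) = 0,
and ξ^α = (1/α)·1{G ≤ λ_α}, we have E[ξ^α] = 1, 0 ≤ ξ^α ≤ 1/α, and
E[ξ^α G] = CVaR_α(G) = (1/α)∫₀^α F_G⁻¹(u) du. -/
theorem stmt11 {Ω : Type*} [MeasurableSpace Ω] (P : Measure Ω) [IsProbabilityMeasure P]
    (G : Ω → ℝ) (hGm : Measurable G) (hG : Integrable G P)
    (α : ℝ) (hα : α ∈ Set.Ioo (0:ℝ) 1)
    (q : ℝ → ℝ) (hq : ∀ u, q u = sInf {z | u ≤ (P {ω | G ω ≤ z}).toReal})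
    (lam : ℝ) (hlam : lam = q α)
    (hatom : P {ω | G ω = lam} = 0)
    (ξ : Ω → ℝ) (hξ : ∀ ω, ξ ω = if G ω ≤ lam then α⁻¹ else 0) :
    (∫ ω, ξ ω ∂P = 1)
    ∧ (∀ ω, ξ ω ∈ Set.Icc (0:ℝ) α⁻¹)
    ∧ (∫ ω, ξ ω * G ω ∂P = α⁻¹ * ∫ u in Set.Ioc (0:ℝ) α, q u) :=
  stmt11_general P G hGm α hα q hq lam hlam hatom ξ hξ
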